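/- Let n ≥ 1 and N ≥ 0 be integers, and let α ∈ [0,1] be a point at which the Bernoulli polynomial B_{n+1} attains its maximum on [0,1]. Then every real-valued trigonometric polynomial Q of degree at most N satisfying 𝓑_{n+1}(x) ≤ Q(x) for all x ∈ ℝ satisfies ∫₀¹ (Q(x) − 𝓑_{n+1}(x)) dx ≥ B_{n+1}(α)/(N+1)^{n+1}. -/

import Mathlib

open MeasureTheory

/-- The `m`-th Bernoulli polynomial evaluated at a real number `x`,
with the generating function `t e^{xt}/(e^t - 1) = ∑ B_m(x) t^m / m!`. -/
noncomputable def bernoulliPoly (m : ℕ) (x : ℝ) : ℝ :=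
  Polynomial.aeval x (Polynomial.bernoulli m)

/-- The `m`-th Bernoulli periodic function `𝓑_m(x) = B_m(x - ⌊x⌋)`. -/
noncomputable def bernoulliPer (m : ℕ) (x : ℝ) : ℝ :=
  bernoulliPoly m (x - ⌊x⌋)

/-- `f : ℝ → ℂ` is a trigonometric polynomial of degree at most `N`:
`f x = ∑_{k=-N}^{N} c_k e^{2πikx}`. -/
def IsTrigPoly (N : ℕ) (f : ℝ → ℂ) : Prop :=
  ∃ c : ℤ → ℂ, ∀ x : ℝ,
    f x = ∑ k ∈ Finset.Icc (-(N : ℤ)) (N : ℤ),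
      c k * Complex.exp (2 * (Real.pi : ℂ) * Complex.I * (k : ℂ) * (x : ℂ))

/-! The equally spaced quadrature rule with `M = N + 1` nodes `(α + j) / M` integrates every
trigonometric polynomial of degree at most `N` exactly over a period, so
`∫ Q = (1/M) ∑ Q((α + j)/M) ≥ (1/M) ∑ B_{n+1}((α + j)/M)`, and by the multiplication
theorem for Bernoulli polynomials `∑ B_{n+1}((α + j)/M) = M^{-n} B_{n+1}(α)`. -/

open scoped Real
open Complex Finset

lemma integral_exp_two_pi_I_int_mul (k : ℤ) :
    ∫ x in (0 : ℝ)..1, exp (2 * π * I * k * x) = if k = 0 then 1 else 0 := by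
  split_ifs with hk
  · simp [hk]
  · have hc : 2 * π * I * k ≠ 0 := by simp [Real.pi_ne_zero, I_ne_zero, hk]
    rw [integral_exp_mul_complex hc, ofReal_one, ofReal_zero, mul_one, mul_zero, exp_zero,
      show 2 * π * I * k = k * (2 * π * I) by ring, exp_int_mul_two_pi_mul_I, sub_self, zero_div]

lemma sum_sample_exp_eq_integral {M : ℕ} {k : ℤ} (hk : k.natAbs < M) (β : ℝ) :
    ∑ j ∈ range M, exp (2 * π * I * k * ↑(β + j / M)) =
      M * ∫ x in (0 : ℝ)..1, exp (2 * π * I * k * x) := by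
  rw [integral_exp_two_pi_I_int_mul]
  split_ifs with hk0
  · simp [hk0]
  have hζ := isPrimitiveRoot_exp M (by omega)
  have hz : exp (2 * π * I / M) ^ k ≠ 1 := fun h =>
    hk0 (Int.eq_zero_of_dvd_of_natAbs_lt_natAbs ((hζ.zpow_eq_one_iff_dvd k).mp h) (by simpa))
  have hzM : (exp (2 * π * I / M) ^ k) ^ M = 1 := by
    rw [← zpow_natCast, ← zpow_mul, mul_comm k, zpow_mul, zpow_natCast, hζ.pow_eq_one,
      one_zpow]
  have hterm (j : ℕ) : exp (2 * π * I * k * ↑(β + j / M)) =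
      exp (2 * π * I * k * β) * (exp (2 * π * I / M) ^ k) ^ j := by
    rw [← exp_int_mul, ← exp_nat_mul, ← exp_add]
    push_cast
    ring_nf
  simp only [hterm, ← mul_sum, geom_sum_eq hz, hzM, sub_self, zero_div, mul_zero]

lemma IsTrigPoly.continuous {N : ℕ} {f : ℝ → ℂ} (hf : IsTrigPoly N f) : Continuous f := by
  obtain ⟨c, hc⟩ := hf
  rw [funext hc]
  fun_prop

lemma IsTrigPoly.sum_sample_eq_integral {N M : ℕ} {f : ℝ → ℂ} (hf : IsTrigPoly N f)
    (hNM : N < M) (β : ℝ) :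
    ∑ j ∈ range M, f (β + j / M) = M * ∫ x in (0 : ℝ)..1, f x := by
  obtain ⟨c, hc⟩ := hf
  simp only [hc]
  rw [intervalIntegral.integral_finsetSum fun k _ =>
    (by fun_prop : Continuous _).intervalIntegrable _ _, mul_sum, sum_comm]
  refine sum_congr rfl fun k hk => ?_
  have hkM : k.natAbs < M := by rw [mem_Icc] at hk; omega
  rw [← mul_sum, sum_sample_exp_eq_integral hkM, intervalIntegral.integral_const_mul]
  ring

lemma bernoulliPoly_eq_bernoulliFun (m : ℕ) : bernoulliPoly m = bernoulliFun m := by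
  ext x
  simp [bernoulliPoly, bernoulliFun, Polynomial.aeval_def, Polynomial.eval_map]

lemma bernoulliPer_eq_bernoulliFun {m : ℕ} (hm : m ≠ 1) {x : ℝ}
    (hx : x ∈ Set.Icc (0 : ℝ) 1) :
    bernoulliPer m x = bernoulliFun m x := by
  rw [bernoulliPer, bernoulliPoly_eq_bernoulliFun]
  rcases hx.2.eq_or_lt with rfl | hx1
  · simp [bernoulliFun_endpoints_eq_of_ne_one hm]
  · simp [Int.floor_eq_zero_iff.mpr ⟨hx.1, hx1⟩]

lemma integral_sub_bernoulliPer {m : ℕ} (hm0 : m ≠ 0) (hm1 : m ≠ 1) {f : ℝ → ℝ}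
    (hf : IntervalIntegrable f volume 0 1) :
    ∫ x in (0 : ℝ)..1, (f x - bernoulliPer m x) = ∫ x in (0 : ℝ)..1, f x := by
  rw [intervalIntegral.integral_congr fun x hx => congrArg (f x - ·)
      (bernoulliPer_eq_bernoulliFun hm1 (Set.uIcc_of_le (zero_le_one (α := ℝ)) ▸ hx)),
    intervalIntegral.integral_sub hf (intervalIntegrable_bernoulliFun m 0 1),
    integral_bernoulliFun_eq_zero hm0, sub_zero]

lemma sum_sample_bernoulliFun (k : ℕ) {M : ℕ} (hM : M ≠ 0) (α : ℝ) :
    ∑ j ∈ range M, bernoulliFun k (α / M + j / M) = M * (bernoulliFun k α / M ^ k) := by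
  have hM' : (M : ℝ) ≠ 0 := Nat.cast_ne_zero.mpr hM
  have h := bernoulliFun_mul k hM (α / M)
  rw [mul_div_cancel₀ α hM'] at h
  rw [h]
  field_simp

theorem majorant_lower_bound_general (n N : ℕ) (hn : 1 ≤ n)
    (α : ℝ) (hαmem : α ∈ Set.Icc (0 : ℝ) 1)
    (Q : ℝ → ℝ) (hQtrig : IsTrigPoly N (fun x => (Q x : ℂ)))
    (hQge : ∀ x : ℝ, bernoulliPer (n + 1) x ≤ Q x) :
    (∫ x in (0 : ℝ)..1, (Q x - bernoulliPer (n + 1) x)) ≥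
      bernoulliPoly (n + 1) α / ((N : ℝ) + 1) ^ (n + 1) := by
  set M : ℕ := N + 1
  have hM : (0 : ℝ) < M := by positivity
  have hQ_sample : ∑ j ∈ range M, Q (α / M + j / M) = M * ∫ x in (0 : ℝ)..1, Q x := by
    have h := hQtrig.sum_sample_eq_integral (Nat.lt_succ_self N) (α / M)
    rw [intervalIntegral.integral_ofReal] at h
    exact_mod_cast h
  have hsample_mem (j : ℕ) (hj : j ∈ range M) : α / M + j / M ∈ Set.Icc (0 : ℝ) 1 := by
    have hj : (j : ℝ) + 1 ≤ M := by exact_mod_cast mem_range.mp hj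
    rw [← add_div, Set.mem_Icc, div_le_one hM]
    exact ⟨by have := hαmem.1; positivity, by linarith [hαmem.2]⟩
  have hB_le_Q : ∑ j ∈ range M, bernoulliFun (n + 1) (α / M + j / M) ≤
      ∑ j ∈ range M, Q (α / M + j / M) :=
    sum_le_sum fun j hj =>
      bernoulliPer_eq_bernoulliFun (show n + 1 ≠ 1 by omega) (hsample_mem j hj) ▸ hQge _
  have hQcont : Continuous Q := continuous_re.comp hQtrig.continuous
  rw [ge_iff_le, integral_sub_bernoulliPer (by omega) (by omega) (hQcont.intervalIntegrable 0 1),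
    bernoulliPoly_eq_bernoulliFun]
  rw [sum_sample_bernoulliFun _ N.succ_ne_zero, hQ_sample] at hB_le_Q
  exact_mod_cast le_of_mul_le_mul_left hB_le_Q hM

theorem majorant_lower_bound (n N : ℕ) (hn : 1 ≤ n)
    (α : ℝ) (hαmem : α ∈ Set.Icc (0 : ℝ) 1)
    (hα : ∀ x ∈ Set.Icc (0 : ℝ) 1, bernoulliPoly (n + 1) x ≤ bernoulliPoly (n + 1) α)
    (Q : ℝ → ℝ) (hQtrig : IsTrigPoly N (fun x => (Q x : ℂ)))
    (hQge : ∀ x : ℝ, bernoulliPer (n + 1) x ≤ Q x) :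
    (∫ x in (0 : ℝ)..1, (Q x - bernoulliPer (n + 1) x)) ≥
      bernoulliPoly (n + 1) α / ((N : ℝ) + 1) ^ (n + 1) :=
  majorant_lower_bound_general n N hn α hαmem Q hQtrig hQge
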